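/- arXiv:1904.13133 — 5 statements merged into one kernel-verified Lean document; each statement's English description precedes it below -/
import Mathlib

section
/- Let S be a countable discrete semigroup with identity. (i) If S is amenable, then S satisfies the Følner condition. (ii) If S satisfies the Følner condition, then the semigroup algebra ℂS is algebraically amenable. -/
/-- A finitely additive probability measure on a set `Y`: `μ : 𝒫(Y) → [0,1]` with
`μ(Y) = 1` and `μ(A ∪ B) = μ(A) + μ(B)` for disjoint `A, B`. -/

def IsFinAddProb {Y : Type*} (μ : Set Y → ℝ) : Prop :=
  (∀ A : Set Y, 0 ≤ μ A ∧ μ A ≤ 1) ∧ μ (Set.univ : Set Y) = 1 ∧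
    ∀ A B : Set Y, Disjoint A B → μ (A ∪ B) = μ A + μ B

/-- A semigroup is (left) amenable if it carries a left invariant finitely additive
probability measure, where invariance is `μ(s⁻¹A) = μ(A)` with `s⁻¹A = {t | s * t ∈ A}`. -/

def SemigroupAmenable (S : Type*) [Mul S] : Prop :=
  ∃ μ : Set S → ℝ, IsFinAddProb μ ∧ ∀ (s : S) (A : Set S), μ {t | s * t ∈ A} = μ A

/-- The Følner condition: for every `ε > 0` and finite `𝓕 ⊆ S` there is a finite non-empty
`F ⊆ S` with `|sF ∪ F| ≤ (1+ε)|F|` for all `s ∈ 𝓕`. -/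

def FolnerCondition (S : Type*) [Mul S] : Prop :=
  ∀ ε : ℝ, 0 < ε → ∀ 𝓕 : Finset S, ∃ F : Finset S, F.Nonempty ∧
    ∀ s ∈ 𝓕, ((((fun t => s * t) '' (F : Set S)) ∪ (F : Set S)).ncard : ℝ) ≤ (1 + ε) * F.card

/-- Algebraic amenability of a unital `ℂ`-algebra: for every `ε > 0` and finite `𝓕 ⊆ 𝒜`
there is a non-zero finite dimensional subspace `W` with
`dim (a W + W) ≤ (1+ε) dim W` for all `a ∈ 𝓕`. -/

def AlgebraicallyAmenable (A : Type*) [Ring A] [Algebra ℂ A] : Prop :=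
  ∀ ε : ℝ, 0 < ε → ∀ 𝓕 : Finset A, ∃ W : Submodule ℂ A, W ≠ ⊥ ∧ FiniteDimensional ℂ ↥W ∧
    ∀ a ∈ 𝓕, (Module.finrank ℂ ↥(W.map (LinearMap.mulLeft ℂ a) ⊔ W) : ℝ)
      ≤ (1 + ε) * (Module.finrank ℂ ↥W : ℝ)

/-!
(i) If the Følner condition fails for `ε` and `𝓕`, every nonempty finite `F` has some `s ∈ 𝓕`
with `|sF \ F| ≥ ε |F|`. Slicing a finitely supported density `f ≥ 0` into its level sets
(Namioka's trick) yields a `{0,1}`-valued `θ` with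
`∑ₜ f t · ∑_{s ∈ 𝓕} (θ s (s t) - θ s t) ≥ ε ∑ₜ f t`. A Hahn–Banach separation in `ℝ^T` turns
this into a single `θ` with values in `[0,1]` and `∑_{s ∈ 𝓕} (θ s (s t) - θ s t) > ε/2` for all
`t` in a given finite `T`, and Tychonoff's theorem into one with `≥ ε/2` for all `t`. Integrating
this inequality against the invariant measure, after discretising `θ` into finitely many level
sets, gives `0 ≥ ε/2`.

(ii) If `F` is a Følner set for the supports of the elements of `𝓕`, then for `W = ℂF` the space
`aW + W` consists of elements supported on `F ∪ ⋃_{s ∈ supp a} sF`, a set of size at most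
`|F| + ∑_{s ∈ supp a} |sF \ F|`.
-/

open Finset

namespace IsFinAddProb

variable {Y : Type*} {μ : Set Y → ℝ}

lemma measure_empty (hμ : IsFinAddProb μ) : μ ∅ = 0 := by
  have := hμ.2.2 ∅ ∅ disjoint_bot_left
  simp only [Set.union_self] at this
  linarith

lemma measure_inter_add_diff (hμ : IsFinAddProb μ) (E A : Set Y) :
    μ (E ∩ A) + μ (E \ A) = μ E := by
  rw [← hμ.2.2 _ _ Set.disjoint_sdiff_inter.symm, Set.inter_union_sdiff]

lemma mul_measure_le_sum_mul_measure_inter (hμ : IsFinAddProb μ) {ι : Type*} [DecidableEq ι]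
    (I : Finset ι) (B : ι → Set Y) (c : ι → ℝ) (v : ℝ) (E : Set Y)
    (h : ∀ t ∈ E, v ≤ ∑ i ∈ I, c i * (B i).indicator 1 t) :
    v * μ E ≤ ∑ i ∈ I, c i * μ (E ∩ B i) := by
  induction I using Finset.induction_on generalizing v E with
  | empty =>
    rcases E.eq_empty_or_nonempty with rfl | ⟨t, ht⟩
    · simp [hμ.measure_empty]
    · simpa using mul_nonpos_of_nonpos_of_nonneg (by simpa using h t ht) (hμ.1 E).1
  | insert a I ha ih =>
    have h₁ := ih (v - c a) (E ∩ B a) fun t ht => by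
      have := h t ht.1
      rw [sum_insert ha, Set.indicator_of_mem ht.2] at this
      simp only [Pi.one_apply, mul_one] at this
      linarith
    have h₂ := ih v (E \ B a) fun t ht => by
      simpa [sum_insert ha, Set.indicator_of_notMem ht.2] using h t ht.1
    have hsplit : ∀ i, μ (E ∩ B a ∩ B i) + μ (E \ B a ∩ B i) = μ (E ∩ B i) := fun i => by
      rw [Set.inter_right_comm, ← Set.inter_sdiff_right_comm, hμ.measure_inter_add_diff]
    rw [sum_insert ha, ← hμ.measure_inter_add_diff E (B a)]
    calc v * (μ (E ∩ B a) + μ (E \ B a))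
        = (v - c a) * μ (E ∩ B a) + v * μ (E \ B a) + c a * μ (E ∩ B a) := by ring
      _ ≤ ∑ i ∈ I, c i * μ (E ∩ B a ∩ B i) + ∑ i ∈ I, c i * μ (E \ B a ∩ B i)
          + c a * μ (E ∩ B a) := by gcongr
      _ = _ := by
        rw [← sum_add_distrib, add_comm]
        simp only [← mul_add, hsplit]

lemma le_sum_mul_measure (hμ : IsFinAddProb μ) {ι : Type*} [DecidableEq ι]
    (I : Finset ι) (B : ι → Set Y) (c : ι → ℝ) (v : ℝ)
    (h : ∀ t, v ≤ ∑ i ∈ I, c i * (B i).indicator 1 t) :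
    v ≤ ∑ i ∈ I, c i * μ (B i) := by
  simpa [hμ.2.1] using hμ.mul_measure_le_sum_mul_measure_inter I B c v Set.univ fun t _ => h t

end IsFinAddProb

lemma sum_ite_le_mul_eq_floor (N : ℕ) {y : ℝ} (h0 : 0 ≤ y) (h1 : y ≤ 1) :
    ∑ k ∈ Icc 1 N, (if (k : ℝ) ≤ N * y then (1 : ℝ) else 0) = ⌊N * y⌋₊ := by
  have hfloor : ⌊N * y⌋₊ ≤ N := Nat.floor_le_of_le (by nlinarith)
  have : (Icc 1 N).filter (fun k : ℕ => (k : ℝ) ≤ N * y) = Icc 1 ⌊N * y⌋₊ := by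
    ext k
    have hle := Nat.le_floor_iff (n := k) (by positivity : (0:ℝ) ≤ N * y)
    simp only [mem_filter, mem_Icc]
    constructor
    · rintro ⟨⟨hk, -⟩, hky⟩; exact ⟨hk, hle.2 hky⟩
    · rintro ⟨hk, hky⟩; exact ⟨⟨hk, hky.trans hfloor⟩, hle.1 hky⟩
  rw [sum_boole, this, Nat.card_Icc, Nat.add_sub_cancel]

lemma card_image_sdiff_le_sum_indicator_sub {α : Type*} [DecidableEq α] (φ : α → α)
    (F : Finset α) (U : Set α) (hout : ∀ x ∈ F.image φ, x ∉ F → x ∈ U)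
    (hin : ∀ x ∈ F, x ∈ U → x ∈ F.image φ) :
    ((F.image φ \ F).card : ℝ) ≤ ∑ t ∈ F, (U.indicator 1 (φ t) - U.indicator 1 t) := by
  classical
  have hsub : F.image φ \ F ∪ F.filter (· ∈ U) ⊆ (F.image φ).filter (· ∈ U) := by
    intro x hx
    rcases mem_union.1 hx with hx | hx
    · obtain ⟨hxφ, hxF⟩ := mem_sdiff.1 hx
      exact mem_filter.2 ⟨hxφ, hout x hxφ hxF⟩
    · obtain ⟨hxF, hxU⟩ := mem_filter.1 hx
      exact mem_filter.2 ⟨hin x hxF hxU, hxU⟩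
  have hcard : (F.image φ \ F ∪ F.filter (· ∈ U)).card ≤ (F.filter fun t => φ t ∈ U).card := by
    refine (card_le_card hsub).trans ?_
    rw [filter_image]
    exact card_image_le
  rw [card_union_of_disjoint (disjoint_left.2 fun x h₁ h₂ =>
    (mem_sdiff.1 h₁).2 (mem_filter.1 h₂).1)] at hcard
  simp only [sum_sub_distrib, Set.indicator_apply, Pi.one_apply, sum_boole]
  rw [le_sub_iff_add_le]
  exact_mod_cast hcard

lemma sum_mul_le_sum_mul_of_forall_sum_filter_le {α : Type*} (T : Finset α) (f g h : α → ℝ)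
    (hf : ∀ t ∈ T, 0 ≤ f t)
    (hgh : ∀ r, 0 ≤ r → ∑ t ∈ T with r < f t, g t ≤ ∑ t ∈ T with r < f t, h t) :
    ∑ t ∈ T, f t * g t ≤ ∑ t ∈ T, f t * h t := by
  classical
  suffices H : ∀ c, (∀ t ∈ T, c ≤ f t) →
      (∀ r, c ≤ r → ∑ t ∈ T with r < f t, g t ≤ ∑ t ∈ T with r < f t, h t) →
      ∑ t ∈ T, (f t - c) * g t ≤ ∑ t ∈ T, (f t - c) * h t by
    simpa using H 0 hf hgh
  clear hf hgh
  induction T using Finset.induction_on_min_value f with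
  | empty => simp
  | insert a T ha hmin ih =>
    intro c hc hcr
    have hac := hc a (mem_insert_self a T)
    have hsplit : ∀ k : α → ℝ, ∑ t ∈ insert a T, (f t - c) * k t
        = (f a - c) * ∑ t ∈ insert a T, k t + ∑ t ∈ T, (f t - f a) * k t := fun k => by
      rw [sum_insert ha, sum_insert ha, mul_add, add_assoc, mul_sum, ← sum_add_distrib]
      congr 1
      exact sum_congr rfl fun t _ => by ring
    have hbase : (f a - c) * ∑ t ∈ insert a T, g t ≤ (f a - c) * ∑ t ∈ insert a T, h t := by
      rcases hac.eq_or_lt with hca | hca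
      · simp [hca]
      · refine mul_le_mul_of_nonneg_left ?_ (sub_nonneg.2 hac)
        have := hcr c le_rfl
        rwa [filter_true_of_mem fun t ht => hca.trans_le ?_] at this
        rcases mem_insert.1 ht with rfl | ht
        exacts [le_rfl, hmin t ht]
    have hstep := ih (f a) hmin fun r hr => by
      have := hcr r (hac.trans hr)
      rwa [filter_insert, if_neg hr.not_gt] at this
    rw [hsplit g, hsplit h]
    exact add_le_add hbase hstep

theorem exists_mem_forall_lt_of_forall_exists_le {ι : Type*} [Fintype ι] {K : Set (ι → ℝ)}
    (hK : Convex ℝ K) {a b : ℝ} (hba : b < a)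
    (h : ∀ w : ι → ℝ, 0 ≤ w → ∃ x ∈ K, a * ∑ i, w i ≤ ∑ i, w i * x i) :
    ∃ x ∈ K, ∀ i, b < x i := by
  classical
  by_contra! hK'
  set Q : Set (ι → ℝ) := Set.univ.pi fun _ => Set.Ioi b
  have hQ : Disjoint Q K := Set.disjoint_left.2 fun y hyQ hyK => by
    obtain ⟨i, hi⟩ := hK' y hyK
    exact hi.not_gt (hyQ i (Set.mem_univ i))
  obtain ⟨φ, u, hφQ, hφK⟩ := geometric_hahn_banach_open
    (convex_pi fun _ _ => convex_Ioi b) (isOpen_set_pi Set.finite_univ fun _ _ => isOpen_Ioi)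
    hK hQ
  set e : ι → ι → ℝ := fun i j => if i = j then 1 else 0
  set w : ι → ℝ := fun i => -φ (e i)
  have hφ : ∀ y, φ y = -∑ i, w i * y i := fun y => by
    simpa [w, e, mul_comm] using (φ : (ι → ℝ) →ₗ[ℝ] ℝ).pi_apply_eq_sum_univ y
  have ha : (fun _ => a) ∈ Q := fun _ _ => hba
  have hua := hφQ _ ha
  -- `φ` is bounded above on `Q`, which is stable under adding nonnegative multiples of `e i`.
  have hw : 0 ≤ w := fun i => by
    by_contra! hwi
    have hei : 0 < φ (e i) := by simpa [w] using hwi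
    set r := (u - φ fun _ => a) / φ (e i)
    have hr : 0 ≤ r := div_nonneg (by linarith) hei.le
    have hre : r * φ (e i) = u - φ fun _ => a := div_mul_cancel₀ _ hei.ne'
    have := hφQ ((fun _ => a) + r • e i) fun j _ => by
      have : 0 ≤ e i j := by simp only [e]; split_ifs <;> norm_num
      simp only [Set.mem_Ioi, Pi.add_apply, Pi.smul_apply, smul_eq_mul]
      nlinarith
    rw [map_add, map_smul, smul_eq_mul] at this
    linarith
  obtain ⟨x, hxK, hx⟩ := h w hw
  have hux := hφK x hxK
  -- Evaluating at `x` and at the constant `a`: `-a ∑ w < u ≤ -∑ w x ≤ -a ∑ w`.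
  rw [hφ] at hua hux
  rw [← sum_mul] at hua
  linarith

lemma card_union_biUnion_le {α ι : Type*} [DecidableEq α] (F : Finset α) (A : Finset ι)
    (g : ι → Finset α) : (F ∪ A.biUnion g).card ≤ F.card + ∑ i ∈ A, (g i \ F).card := by
  calc (F ∪ A.biUnion g).card = (F ∪ A.biUnion fun i => g i \ F).card := by
        congr 1; ext x; simp only [mem_union, mem_biUnion, mem_sdiff]; tauto
    _ ≤ F.card + (A.biUnion fun i => g i \ F).card := card_union_le _ _
    _ ≤ _ := add_le_add_right card_biUnion_le _

lemma folnerCondition_iff {S : Type*} [Mul S] [DecidableEq S] :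
    FolnerCondition S ↔ ∀ ε : ℝ, 0 < ε → ∀ 𝓕 : Finset S, ∃ F : Finset S, F.Nonempty ∧
      ∀ s ∈ 𝓕, ((F.image (s * ·) \ F).card : ℝ) ≤ ε * F.card := by
  have key : ∀ (s : S) (F : Finset S) (ε : ℝ),
      ((((fun t => s * t) '' (F : Set S)) ∪ (F : Set S)).ncard : ℝ) ≤ (1 + ε) * F.card ↔
        ((F.image (s * ·) \ F).card : ℝ) ≤ ε * F.card := fun s F ε => by
    rw [← coe_image, ← coe_union, Set.ncard_coe_finset, ← card_sdiff_add_card]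
    push_cast
    constructor <;> intro h <;> linarith
  simp only [FolnerCondition, key]

section LeftDiff

variable {S : Type*}

def unitCube (S : Type*) : Set (S → S → ℝ) :=
  Set.univ.pi fun _ => Set.univ.pi fun _ => Set.Icc 0 1

lemma indicator_one_mem_unitCube (U : S → Set S) : (fun s => (U s).indicator 1) ∈ unitCube S := by
  simp only [unitCube, Set.mem_univ_pi, Set.mem_Icc]
  intro s x
  by_cases hx : x ∈ U s <;> simp [hx]

variable [Mul S]

def leftDiff (𝓕 : Finset S) (θ : S → S → ℝ) (t : S) : ℝ :=
  ∑ s ∈ 𝓕, (θ s (s * t) - θ s t)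

lemma IsFinAddProb.le_zero_of_le_sum_indicator_sub {μ : Set S → ℝ} (hμ : IsFinAddProb μ)
    (hinv : ∀ (s : S) (A : Set S), μ {t | s * t ∈ A} = μ A) {ι : Type*} [DecidableEq ι]
    (I : Finset ι) (s : ι → S) (A : ι → Set S) (c : ι → ℝ) (v : ℝ)
    (h : ∀ t, v ≤ ∑ i ∈ I, c i * ((A i).indicator 1 (s i * t) - (A i).indicator 1 t)) :
    v ≤ 0 := by
  have := hμ.le_sum_mul_measure (I.disjSum I) (Sum.elim (fun i => {t | s i * t ∈ A i}) A)
    (Sum.elim c (-c)) v fun t => by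
      have hpre : ∀ i, {t | s i * t ∈ A i}.indicator (1 : S → ℝ) t = (A i).indicator 1 (s i * t) :=
        fun _ => rfl
      simp only [sum_disjSum, Sum.elim_inl, Sum.elim_inr, hpre, Pi.neg_apply, neg_mul,
        sum_neg_distrib, ← sub_eq_add_neg, ← sum_sub_distrib, ← mul_sub]
      exact h t
  simpa [sum_disjSum, hinv] using this

theorem IsFinAddProb.exists_leftDiff_lt {μ : Set S → ℝ} (hμ : IsFinAddProb μ)
    (hinv : ∀ (s : S) (A : Set S), μ {t | s * t ∈ A} = μ A) (𝓕 : Finset S) {θ : S → S → ℝ}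
    (hθ : θ ∈ unitCube S) {δ : ℝ} (hδ : 0 < δ) : ∃ t, leftDiff 𝓕 θ t < δ := by
  classical
  by_contra! hθδ
  simp only [unitCube, Set.mem_univ_pi, Set.mem_Icc] at hθ
  obtain ⟨N, hN⟩ := exists_nat_gt (𝓕.card / δ)
  have hNpos : (0 : ℝ) < N := lt_of_le_of_lt (by positivity) hN
  have hgap : 0 < δ - 𝓕.card / N := by
    rw [sub_pos, div_lt_iff₀ hNpos]; rw [div_lt_iff₀ hδ] at hN; linarith
  -- `⌊N θ s⌋₊ / N` is a combination of indicators of level sets of `θ s`, and `μ` does not see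
  -- the difference between such an indicator and its translate.
  refine hgap.not_ge (hμ.le_zero_of_le_sum_indicator_sub hinv (𝓕 ×ˢ Icc 1 N) Prod.fst
    (fun p => {x | (p.2 : ℝ) ≤ N * θ p.1 x}) (fun _ => 1 / N) _ fun t => ?_)
  have hfloor : ∀ s x, θ s x - 1 / N < (⌊N * θ s x⌋₊ : ℝ) / N ∧ (⌊N * θ s x⌋₊ : ℝ) / N ≤ θ s x :=
    fun s x => by
      have h0 : 0 ≤ N * θ s x := mul_nonneg hNpos.le (hθ s x).1
      constructor
      · rw [lt_div_iff₀ hNpos, sub_mul, one_div_mul_cancel hNpos.ne']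
        linarith [Nat.lt_floor_add_one (N * θ s x)]
      · rw [div_le_iff₀ hNpos]
        linarith [Nat.floor_le h0]
  calc δ - 𝓕.card / N ≤ leftDiff 𝓕 θ t - ∑ s ∈ 𝓕, 1 / (N : ℝ) := by
        simp only [sum_const, nsmul_eq_mul, mul_one_div]; linarith [hθδ t]
    _ ≤ ∑ s ∈ 𝓕, ((⌊N * θ s (s * t)⌋₊ : ℝ) / N - (⌊N * θ s t⌋₊ : ℝ) / N) := by
        rw [leftDiff, ← sum_sub_distrib]
        refine sum_le_sum fun s _ => ?_
        linarith [(hfloor s (s * t)).1, (hfloor s t).2]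
    _ = _ := by
        rw [sum_product]
        refine sum_congr rfl fun s _ => ?_
        simp only [Set.indicator_apply, Set.mem_ofPred_eq, Pi.one_apply, ← mul_sum,
          sum_sub_distrib, sum_ite_le_mul_eq_floor N (hθ s _).1 (hθ s _).2]
        ring

variable [DecidableEq S]

theorem exists_mem_unitCube_mul_sum_le_sum_mul_leftDiff {𝓕 : Finset S} {ε : ℝ}
    (hexp : ∀ F : Finset S, F.Nonempty →
      ∃ s ∈ 𝓕, ε * F.card ≤ ((F.image (s * ·) \ F).card : ℝ))
    (T : Finset S) (f : S → ℝ) (hf : ∀ t ∈ T, 0 ≤ f t) :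
    ∃ θ ∈ unitCube S, ε * ∑ t ∈ T, f t ≤ ∑ t ∈ T, f t * leftDiff 𝓕 θ t := by
  -- `U s` is where the `s`-translate of `f` exceeds `f`; it serves all level sets of `f` at once.
  set U : S → Set S := fun s => {x | ∃ t ∈ T, s * t = x ∧ (x ∈ T → f x < f t)}
  refine ⟨_, indicator_one_mem_unitCube U, ?_⟩
  simp_rw [mul_sum, mul_comm ε]
  refine sum_mul_le_sum_mul_of_forall_sum_filter_le T f _ _ hf fun r _ => ?_
  set F := T.filter (r < f ·)
  rcases F.eq_empty_or_nonempty with hF | hF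
  · simp [F, hF]
  have hlevel : ∀ s, ((F.image (s * ·) \ F).card : ℝ)
      ≤ ∑ t ∈ F, ((U s).indicator 1 (s * t) - (U s).indicator 1 t) := fun s => by
    refine card_image_sdiff_le_sum_indicator_sub _ F (U s) (fun x hx hxF => ?_) fun x hx hxU => ?_
    · obtain ⟨t, ht, rfl⟩ := mem_image.1 hx
      obtain ⟨htT, hrt⟩ := mem_filter.1 ht
      exact ⟨t, htT, rfl, fun hxT => (not_lt.1 fun h => hxF (mem_filter.2 ⟨hxT, h⟩)).trans_lt hrt⟩
    · obtain ⟨hxT, hrx⟩ := mem_filter.1 hx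
      obtain ⟨t, htT, rfl, hlt⟩ := hxU
      exact mem_image.2 ⟨t, mem_filter.2 ⟨htT, hrx.trans (hlt hxT)⟩, rfl⟩
  obtain ⟨s₀, hs₀, hle⟩ := hexp F hF
  calc ∑ t ∈ F, ε = ε * F.card := by rw [sum_const, nsmul_eq_mul, mul_comm]
    _ ≤ ∑ t ∈ F, ((U s₀).indicator 1 (s₀ * t) - (U s₀).indicator 1 t) := hle.trans (hlevel s₀)
    _ ≤ ∑ s ∈ 𝓕, ∑ t ∈ F, ((U s).indicator 1 (s * t) - (U s).indicator 1 t) :=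
      single_le_sum (f := fun s => ∑ t ∈ F, ((U s).indicator 1 (s * t) - (U s).indicator 1 t))
        (fun s _ => (Nat.cast_nonneg _).trans (hlevel s)) hs₀
    _ = _ := sum_comm

theorem exists_mem_unitCube_forall_mem_lt_leftDiff
    {𝓕 : Finset S} {ε : ℝ} (hε : 0 < ε)
    (hexp : ∀ F : Finset S, F.Nonempty →
      ∃ s ∈ 𝓕, ε * F.card ≤ ((F.image (s * ·) \ F).card : ℝ))
    (T : Finset S) : ∃ θ ∈ unitCube S, ∀ t ∈ T, ε / 2 < leftDiff 𝓕 θ t := by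
  have hK : Convex ℝ ((fun θ (t : T) => leftDiff 𝓕 θ t) '' unitCube S) :=
    (convex_pi fun _ _ => convex_pi fun _ _ => convex_Icc 0 1).is_linear_image
      ⟨fun θ η => by ext; simp [leftDiff, sum_add_distrib]; ring,
       fun c θ => by ext; simp [leftDiff, mul_sum, mul_sub]⟩
  obtain ⟨_, ⟨θ, hθ, rfl⟩, hθT⟩ :=
    exists_mem_forall_lt_of_forall_exists_le hK (half_lt_self hε) fun w hw => by
      obtain ⟨θ, hθ, hle⟩ := exists_mem_unitCube_mul_sum_le_sum_mul_leftDiff hexp T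
        (fun y => if hy : y ∈ T then w ⟨y, hy⟩ else 0) fun t ht => by simpa [ht] using hw ⟨t, ht⟩
      refine ⟨_, ⟨θ, hθ, rfl⟩, ?_⟩
      simpa [← sum_coe_sort T] using hle
  exact ⟨θ, hθ, fun t ht => hθT ⟨t, ht⟩⟩

theorem exists_mem_unitCube_forall_le_leftDiff
    {𝓕 : Finset S} {ε : ℝ} (hε : 0 < ε)
    (hexp : ∀ F : Finset S, F.Nonempty →
      ∃ s ∈ 𝓕, ε * F.card ≤ ((F.image (s * ·) \ F).card : ℝ)) :
    ∃ θ ∈ unitCube S, ∀ t, ε / 2 ≤ leftDiff 𝓕 θ t := by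
  have hcube : IsCompact (unitCube S) :=
    isCompact_univ_pi fun _ => isCompact_univ_pi fun _ => isCompact_Icc
  obtain ⟨θ, hθ, hθt⟩ := hcube.inter_iInter_nonempty (fun t => {θ | ε / 2 ≤ leftDiff 𝓕 θ t})
    (fun t => isClosed_le continuous_const (by unfold leftDiff; fun_prop)) fun u => by
      obtain ⟨θ, hθ, hθt⟩ := exists_mem_unitCube_forall_mem_lt_leftDiff hε hexp u
      exact ⟨θ, hθ, Set.mem_iInter₂.2 fun t ht => (hθt t ht).le⟩
  exact ⟨θ, hθ, Set.mem_iInter.1 hθt⟩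

end LeftDiff

theorem SemigroupAmenable.folnerCondition {S : Type*} [Mul S] (h : SemigroupAmenable S) :
    FolnerCondition S := by
  classical
  obtain ⟨μ, hμ, hinv⟩ := h
  rw [folnerCondition_iff]
  intro ε hε 𝓕
  by_contra! hexp
  obtain ⟨θ, hθ, hθt⟩ := exists_mem_unitCube_forall_le_leftDiff hε
    fun F hF => (hexp F hF).imp fun _ ⟨hs, hlt⟩ => ⟨hs, hlt.le⟩
  obtain ⟨t, ht⟩ := hμ.exists_leftDiff_lt hinv 𝓕 hθ (half_pos hε)
  exact (hθt t).not_gt ht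

namespace MonoidAlgebra

variable {k S : Type*} [Field k]

instance finiteDimensional_supported (F : Finset S) :
    FiniteDimensional k (supported k k (F : Set S)) :=
  (supportedEquivFinsupp (R := k) (S := k) (F : Set S)).symm.finiteDimensional

lemma finrank_supported (F : Finset S) :
    Module.finrank k (supported k k (F : Set S)) = F.card := by
  rw [(supportedEquivFinsupp (F : Set S)).finrank_eq, Module.finrank_finsupp_self]
  simp

variable [Mul S] [DecidableEq S]

lemma map_mulLeft_sup_le_supported (a : MonoidAlgebra k S) (F : Finset S) :
    (supported k k (F : Set S)).map (LinearMap.mulLeft k a) ⊔ supported k k (F : Set S) ≤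
      supported k k ↑(F ∪ a.coeff.support.biUnion fun s => F.image (s * ·)) := by
  refine sup_le ?_ (supported_mono (by simp))
  rintro _ ⟨x, hx, rfl⟩
  rw [SetLike.mem_coe, mem_supported] at hx
  rw [mem_supported, coe_subset]
  refine (support_coeff_mul_subset a x).trans fun y hy => ?_
  obtain ⟨s, hs, t, ht, rfl⟩ := mem_mul.1 hy
  exact mem_union_right _ (mem_biUnion.2 ⟨s, hs, mem_image_of_mem _ (hx ht)⟩)

lemma finrank_map_mulLeft_sup_le (a : MonoidAlgebra k S) (F : Finset S) :
    Module.finrank k ↥((supported k k (F : Set S)).map (LinearMap.mulLeft k a) ⊔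
      supported k k (F : Set S)) ≤ F.card + ∑ s ∈ a.coeff.support, (F.image (s * ·) \ F).card :=
  calc _ ≤ _ := Submodule.finrank_mono (map_mulLeft_sup_le_supported a F)
    _ ≤ _ := (finrank_supported _).trans_le (card_union_biUnion_le _ _ _)

end MonoidAlgebra

theorem FolnerCondition.algebraicallyAmenable {S : Type*} [Monoid S] (h : FolnerCondition S) :
    AlgebraicallyAmenable (MonoidAlgebra ℂ S) := by
  classical
  rw [folnerCondition_iff] at h
  intro ε hε 𝓕
  set T := 𝓕.biUnion fun a => a.coeff.support
  obtain ⟨F, hF, hFol⟩ := h (ε / (T.card + 1)) (by positivity) T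
  refine ⟨MonoidAlgebra.supported ℂ ℂ (F : Set S), fun hbot => ?_, inferInstance, fun a ha => ?_⟩
  · have := MonoidAlgebra.finrank_supported (k := ℂ) F
    rw [hbot, finrank_bot] at this
    exact hF.card_pos.ne this
  have hT : a.coeff.support ⊆ T := subset_biUnion_of_mem (fun a => a.coeff.support) ha
  have hcard : (a.coeff.support.card : ℝ) ≤ T.card + 1 := by
    exact_mod_cast (card_le_card hT).trans (Nat.le_succ _)
  rw [MonoidAlgebra.finrank_supported]
  calc _ ≤ (F.card : ℝ) + ∑ s ∈ a.coeff.support, ((F.image (s * ·) \ F).card : ℝ) := by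
        exact_mod_cast MonoidAlgebra.finrank_map_mulLeft_sup_le a F
    _ ≤ F.card + ∑ s ∈ a.coeff.support, ε / (T.card + 1) * F.card :=
        add_le_add_right (sum_le_sum fun s hs => hFol s (hT hs)) _
    _ = F.card + a.coeff.support.card / (T.card + 1) * ε * F.card := by
        rw [sum_const, nsmul_eq_mul]; ring
    _ ≤ F.card + 1 * ε * F.card := by
        gcongr
        exact (div_le_one (by positivity)).2 hcard
    _ = (1 + ε) * F.card := by ring

theorem statement0_general (S : Type*) [Monoid S] :
    (SemigroupAmenable S → FolnerCondition S) ∧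
    (FolnerCondition S → AlgebraicallyAmenable (MonoidAlgebra ℂ S)) :=
  ⟨SemigroupAmenable.folnerCondition, FolnerCondition.algebraicallyAmenable⟩

/-- (i) an amenable countable unital semigroup satisfies the Følner condition;
(ii) the Følner condition implies algebraic amenability of the semigroup algebra `ℂS`. -/
theorem statement0 (S : Type*) [Monoid S] [Countable S] :
    (SemigroupAmenable S → FolnerCondition S) ∧
    (FolnerCondition S → AlgebraicallyAmenable (MonoidAlgebra ℂ S)) :=
  statement0_general S
end

section
/- Let S be a semigroup. If S satisfies the Følner condition but does not satisfy the proper Følner condition, then there exists an element a ∈ S such that the principal left ideal Sa = {sa : s ∈ S} is finite. -/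
/-- The proper Følner condition: in addition the Følner set `F` can be chosen to contain
any prescribed finite set `A`. -/
def ProperFolnerCondition (S : Type*) [Mul S] : Prop :=
  ∀ ε : ℝ, 0 < ε → ∀ 𝓕 A : Finset S, ∃ F : Finset S, F.Nonempty ∧ A ⊆ F ∧
    ∀ s ∈ 𝓕, ((((fun t => s * t) '' (F : Set S)) ∪ (F : Set S)).ncard : ℝ) ≤ (1 + ε) * F.card

open Finset

section

variable {S : Type*} [Mul S]

def IsFolnerSet [DecidableEq S] (ε : ℝ) (𝓕 F : Finset S) : Prop :=
  ∀ s ∈ 𝓕, ((F.image (s * ·) ∪ F).card : ℝ) ≤ (1 + ε) * F.card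

def IsInvariantUnder (𝓕 F : Finset S) : Prop :=
  ∀ s ∈ 𝓕, ∀ t ∈ F, s * t ∈ F

section Folner

variable [DecidableEq S] {ε δ η : ℝ} {𝓕 𝓕' F A : Finset S}

theorem ncard_image_mul_union (s : S) (F : Finset S) :
    (((fun t => s * t) '' (F : Set S)) ∪ (F : Set S)).ncard = (F.image (s * ·) ∪ F).card := by
  rw [← Finset.coe_image, ← Finset.coe_union, Set.ncard_coe_finset]

theorem folnerCondition_iff_s3 : FolnerCondition S ↔
    ∀ ε, 0 < ε → ∀ 𝓕 : Finset S, ∃ F : Finset S, F.Nonempty ∧ IsFolnerSet ε 𝓕 F := by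
  simp only [FolnerCondition, IsFolnerSet, ncard_image_mul_union]

theorem properFolnerCondition_iff : ProperFolnerCondition S ↔
    ∀ ε, 0 < ε → ∀ 𝓕 A : Finset S, ∃ F : Finset S, F.Nonempty ∧ A ⊆ F ∧ IsFolnerSet ε 𝓕 F := by
  simp only [ProperFolnerCondition, IsFolnerSet, ncard_image_mul_union]

theorem IsFolnerSet.mono (h : IsFolnerSet δ 𝓕 F) (h𝓕 : 𝓕' ⊆ 𝓕) (hδ : δ ≤ ε) :
    IsFolnerSet ε 𝓕' F := fun s hs =>
  (h s (h𝓕 hs)).trans (by gcongr)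

theorem card_image_mul_union_union_le (s : S) (F A : Finset S) :
    ((F ∪ A).image (s * ·) ∪ (F ∪ A)).card ≤ (F.image (s * ·) ∪ F).card + 2 * A.card := by
  calc ((F ∪ A).image (s * ·) ∪ (F ∪ A)).card
      = ((F.image (s * ·) ∪ F) ∪ (A.image (s * ·) ∪ A)).card := by
        rw [image_union, union_union_union_comm]
    _ ≤ (F.image (s * ·) ∪ F).card + (A.image (s * ·) ∪ A).card := card_union_le _ _
    _ ≤ (F.image (s * ·) ∪ F).card + 2 * A.card := by
        have := (card_union_le (A.image (s * ·)) A).trans (Nat.add_le_add_right card_image_le _)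
        omega

theorem IsFolnerSet.union (h : IsFolnerSet δ 𝓕 F) (hδ : 0 ≤ δ) (hη : 0 ≤ η)
    (hA : 2 * (A.card : ℝ) ≤ η * F.card) : IsFolnerSet (δ + η) 𝓕 (F ∪ A) := by
  intro s hs
  have hsplit : (((F ∪ A).image (s * ·) ∪ (F ∪ A)).card : ℝ) ≤
      (F.image (s * ·) ∪ F).card + 2 * A.card := by
    exact_mod_cast card_image_mul_union_union_le s F A
  have hF : (F.card : ℝ) ≤ (F ∪ A).card := by exact_mod_cast card_le_card subset_union_left
  calc (((F ∪ A).image (s * ·) ∪ (F ∪ A)).card : ℝ)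
      ≤ (1 + δ) * F.card + η * F.card := by linarith [h s hs]
    _ = (1 + (δ + η)) * F.card := by ring
    _ ≤ (1 + (δ + η)) * (F ∪ A).card := by gcongr

theorem IsFolnerSet.card_le_of_forall_not_isFolnerSet (hε : 0 < ε)
    (hA : ∀ F : Finset S, F.Nonempty → A ⊆ F → ¬ IsFolnerSet ε 𝓕 F)
    (hF : IsFolnerSet (ε / 2) 𝓕 F) : (F.card : ℝ) ≤ 4 * A.card / ε := by
  by_contra! hlt
  have hne : F.Nonempty :=
    card_pos.mp (by exact_mod_cast (by positivity : (0 : ℝ) ≤ 4 * A.card / ε).trans_lt hlt)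
  have hAsmall : 2 * (A.card : ℝ) ≤ ε / 2 * F.card := by
    rw [div_lt_iff₀ hε] at hlt
    linarith
  have hunion := hF.union (by positivity) (by positivity) hAsmall
  rw [add_halves] at hunion
  exact hA (F ∪ A) (hne.mono subset_union_left) subset_union_right hunion

/-- Cardinalities are integers, so a Følner ratio below `1 + 1/|F|` forces `sF ∪ F = F`. -/
theorem IsFolnerSet.isInvariantUnder (h : IsFolnerSet δ 𝓕 F) (hδ : δ * F.card < 1) :
    IsInvariantUnder 𝓕 F := by
  intro s hs t ht
  have hlt : ((F.image (s * ·) ∪ F).card : ℝ) < F.card + 1 := by linarith [h s hs]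
  have hle : (F.image (s * ·) ∪ F).card ≤ F.card := by
    exact Nat.lt_add_one_iff.mp (by exact_mod_cast hlt)
  have himage : F.image (s * ·) ⊆ F :=
    union_eq_right.mp (eq_of_subset_of_card_le subset_union_right hle).symm
  exact himage (mem_image_of_mem _ ht)

theorem IsInvariantUnder.isFolnerSet (h : IsInvariantUnder 𝓕 F) (hε : 0 ≤ ε) :
    IsFolnerSet ε 𝓕 F := by
  intro s hs
  rw [union_eq_right.mpr (image_subset_iff.mpr (h s hs))]
  have : 0 ≤ ε * F.card := by positivity
  linarith

theorem exists_isInvariantUnder {N : ℕ} {𝓕₀ : Finset S} (hη : 0 < η)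
    (hfol : ∀ ε, 0 < ε → ∀ 𝓕 : Finset S, ∃ F : Finset S, F.Nonempty ∧ IsFolnerSet ε 𝓕 F)
    (hsmall : ∀ F : Finset S, IsFolnerSet η 𝓕₀ F → F.card ≤ N) (𝓕 : Finset S) :
    ∃ F : Finset S, F.Nonempty ∧ IsInvariantUnder (𝓕 ∪ 𝓕₀) F := by
  set δ := min η (1 / (N + 1))
  obtain ⟨F, hne, hF⟩ := hfol δ (by positivity) (𝓕 ∪ 𝓕₀)
  have hcard : (F.card : ℝ) ≤ N := by
    exact_mod_cast hsmall F (hF.mono subset_union_right (min_le_left _ _))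
  refine ⟨F, hne, hF.isInvariantUnder ?_⟩
  calc δ * F.card ≤ 1 / (N + 1) * N := by
        gcongr
        exact min_le_right _ _
    _ < 1 := by
        rw [div_mul_eq_mul_div, one_mul, div_lt_one (by positivity)]
        linarith

end Folner

theorem IsInvariantUnder.mono {𝓕 𝓕' F : Finset S} (h : IsInvariantUnder 𝓕 F) (h𝓕 : 𝓕' ⊆ 𝓕) :
    IsInvariantUnder 𝓕' F := fun s hs => h s (h𝓕 hs)

theorem IsInvariantUnder.union [DecidableEq S] {𝓕 F G : Finset S} (hF : IsInvariantUnder 𝓕 F)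
    (hG : IsInvariantUnder 𝓕 G) : IsInvariantUnder 𝓕 (F ∪ G) := by
  intro s hs t ht
  rcases mem_union.mp ht with ht | ht
  · exact mem_union_left _ (hF s hs t ht)
  · exact mem_union_right _ (hG s hs t ht)

/-- An invariant set of maximal size contains every other invariant set. -/
theorem exists_forall_isInvariantUnder_subset {𝓕 : Finset S} {N : ℕ}
    (h : ∀ F : Finset S, IsInvariantUnder 𝓕 F → F.card ≤ N) :
    ∃ M : Finset S, ∀ F : Finset S, IsInvariantUnder 𝓕 F → F ⊆ M := by
  classical
  let P : ℕ → Prop := fun n => ∃ F : Finset S, IsInvariantUnder 𝓕 F ∧ F.card = n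
  have hempty : IsInvariantUnder 𝓕 ∅ := fun _ _ _ ht => absurd ht (notMem_empty _)
  obtain ⟨M, hM, hMcard⟩ : P (Nat.findGreatest P N) :=
    Nat.findGreatest_spec (Nat.zero_le N) ⟨∅, hempty, rfl⟩
  refine ⟨M, fun F hF => ?_⟩
  have hFM := hF.union hM
  have hle : (F ∪ M).card ≤ M.card := hMcard ▸ Nat.le_findGreatest (h _ hFM) ⟨_, hFM, rfl⟩
  rw [eq_of_subset_of_card_le subset_union_right hle]
  exact subset_union_left

theorem exists_finite_range_mul (M : Finset S)
    (h : ∀ 𝓕 : Finset S, ∃ F ⊆ M, F.Nonempty ∧ IsInvariantUnder 𝓕 F) :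
    ∃ a : S, (Set.range fun s : S => s * a).Finite := by
  classical
  by_contra! hinf
  have hescape : ∀ a : S, ∃ t, t * a ∉ M := by
    intro a
    by_contra! hin
    exact hinf a (M.finite_toSet.subset (Set.range_subset_iff.mpr hin))
  choose t ht using hescape
  obtain ⟨F, hFM, ⟨a, ha⟩, hF⟩ := h (M.image t)
  exact ht a (hFM (hF (t a) (mem_image_of_mem t (hFM ha)) a ha))

end

/-- If a semigroup satisfies the Følner condition but not the proper Følner condition then
some principal left ideal `Sa = {s * a : s ∈ S}` is finite. -/
theorem statement3 (S : Type*) [Semigroup S]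
    (h1 : FolnerCondition S) (h2 : ¬ ProperFolnerCondition S) :
    ∃ a : S, (Set.range fun s : S => s * a).Finite := by
  classical
  rw [folnerCondition_iff_s3] at h1
  rw [properFolnerCondition_iff] at h2
  push Not at h2
  obtain ⟨ε, hε, 𝓕₀, A, hA⟩ := h2
  have hsmall : ∀ F : Finset S, IsFolnerSet (ε / 2) 𝓕₀ F → F.card ≤ ⌊4 * A.card / ε⌋₊ :=
    fun F hF => Nat.le_floor (hF.card_le_of_forall_not_isFolnerSet hε hA)
  obtain ⟨M, hM⟩ := exists_forall_isInvariantUnder_subset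
    fun F hF => hsmall F (hF.isFolnerSet (by positivity))
  refine exists_finite_range_mul M fun 𝓕 => ?_
  obtain ⟨F, hne, hF⟩ := exists_isInvariantUnder (half_pos hε) h1 hsmall 𝓕
  exact ⟨F, hM F (hF.mono subset_union_right), hne, hF.mono subset_union_left⟩
end

section
/- Let S be a countable discrete inverse semigroup with identity 1 ∈ S and let μ be a finitely additive probability measure on S. Then μ is invariant (i.e., μ(A) = μ(s⁻¹A) for all s ∈ S, A ⊆ S) if and only if for all s ∈ S and A ⊆ S both of the following hold: (2.a) μ(A) = μ(A ∩ (s*s)A), and (2.b) μ((s*s)A) = μ(sA). -/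
/-- Mixin recording that a semigroup with a star operation is an inverse semigroup:
for every `s` the element `star s` is the unique `t` with `s t s = s` and `t s t = t`. -/
class IsInverseSemigroup (S : Type*) [Semigroup S] [Star S] : Prop where
  mul_star_mul_self : ∀ s : S, s * star s * s = s
  star_mul_self_mul_star : ∀ s : S, star s * s * star s = star s
  star_unique : ∀ s t : S, s * t * s = s → t * s * t = t → t = star s

/-- The image `sA` of a subset under left multiplication. -/
def lmulSet {S : Type*} [Mul S] (s : S) (A : Set S) : Set S := (fun t => s * t) '' A

/-!
Both conditions are shadows of invariance under the idempotent `e = s* s`: since `e` is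
idempotent, `e⁻¹(A ∩ eA) = e⁻¹A`, and since `s t = s u ↔ e t = e u`, `e⁻¹(eA) = s⁻¹(sA)`.
Conversely, for `B = s⁻¹A` one has `eB ⊆ B` and `sB = A ∩ (s s*)A`, so (2.a) for `s`, (2.b)
and (2.a) for `s*` give `μ(B) = μ(eB) = μ(sB) = μ(A)`.
-/

lemma mem_lmulSet {S : Type*} [Mul S] {s x : S} {A : Set S} :
    x ∈ lmulSet s A ↔ ∃ a ∈ A, s * a = x :=
  Set.mem_image _ _ _

lemma preimage_inter_lmulSet_of_isIdempotentElem {S : Type*} [Semigroup S] {e : S}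
    (he : IsIdempotentElem e) (A : Set S) :
    {t | e * t ∈ A ∩ lmulSet e A} = {t | e * t ∈ A} := by
  ext t
  simp only [Set.mem_ofPred_eq, Set.mem_inter_iff, mem_lmulSet, and_iff_left_iff_imp]
  exact fun ht => ⟨e * t, ht, by rw [← mul_assoc, he.eq]⟩

namespace IsInverseSemigroup

variable {S : Type*} [Semigroup S] [Star S] [IsInverseSemigroup S]

lemma star_star (s : S) : star (star s) = s :=
  (star_unique (star s) s (star_mul_self_mul_star s) (mul_star_mul_self s)).symm

lemma isIdempotentElem_star_mul_self (s : S) : IsIdempotentElem (star s * s) := by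
  rw [IsIdempotentElem, mul_assoc, ← mul_assoc s, mul_star_mul_self]

lemma isIdempotentElem_mul_star_self (s : S) : IsIdempotentElem (s * star s) := by
  simpa only [star_star] using isIdempotentElem_star_mul_self (star s)

lemma mul_star_mul_self_mul (s t : S) : s * (star s * s * t) = s * t := by
  rw [← mul_assoc, ← mul_assoc, mul_star_mul_self]

lemma mul_left_eq_iff (s t u : S) : s * t = s * u ↔ star s * s * t = star s * s * u :=
  ⟨fun h => by rw [mul_assoc, mul_assoc, h], fun h => by
    rw [← mul_star_mul_self_mul s t, h, mul_star_mul_self_mul]⟩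

lemma preimage_lmulSet_star_mul_self (s : S) (A : Set S) :
    {t | star s * s * t ∈ lmulSet (star s * s) A} = {t | s * t ∈ lmulSet s A} := by
  ext t
  simp only [Set.mem_ofPred_eq, mem_lmulSet]
  exact exists_congr fun a => and_congr_right fun _ => (mul_left_eq_iff s a t).symm

lemma lmulSet_star_mul_self_preimage_subset (s : S) (A : Set S) :
    lmulSet (star s * s) {t | s * t ∈ A} ⊆ {t | s * t ∈ A} := by
  rintro _ ⟨t, ht, rfl⟩
  simpa only [Set.mem_ofPred_eq, mul_star_mul_self_mul] using ht

lemma lmulSet_preimage (s : S) (A : Set S) :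
    lmulSet s {t | s * t ∈ A} = A ∩ lmulSet (s * star s) A := by
  ext x
  simp only [mem_lmulSet, Set.mem_ofPred_eq, Set.mem_inter_iff]
  constructor
  · rintro ⟨t, ht, rfl⟩
    exact ⟨ht, s * t, ht, by rw [← mul_assoc, mul_star_mul_self]⟩
  · rintro ⟨hx, a, -, rfl⟩
    have hsa : s * (star s * (s * star s * a)) = s * star s * a := by
      rw [← mul_assoc, ← mul_assoc, (isIdempotentElem_mul_star_self s).eq]
    exact ⟨star s * (s * star s * a), by rwa [hsa], hsa⟩

end IsInverseSemigroup

open IsInverseSemigroup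

theorem statement5_general (S : Type*) [Monoid S] [Star S] [IsInverseSemigroup S]
    (μ : Set S → ℝ) :
    (∀ (s : S) (A : Set S), μ A = μ {t | s * t ∈ A}) ↔
    (∀ (s : S) (A : Set S),
      μ A = μ (A ∩ lmulSet (star s * s) A) ∧
      μ (lmulSet (star s * s) A) = μ (lmulSet s A)) := by
  constructor
  · intro hinv s A
    constructor
    · rw [hinv (star s * s) A, hinv (star s * s) (A ∩ _),
        preimage_inter_lmulSet_of_isIdempotentElem (isIdempotentElem_star_mul_self s)]
    · rw [hinv (star s * s), hinv s (lmulSet s A), preimage_lmulSet_star_mul_self]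
  · intro h s A
    have hB := (h s {t | s * t ∈ A}).1
    rw [Set.inter_eq_self_of_subset_right (lmulSet_star_mul_self_preimage_subset s A)] at hB
    have hA := (h (star s) A).1
    rw [IsInverseSemigroup.star_star] at hA
    rw [hB, (h s _).2, lmulSet_preimage, ← hA]

/-- A finitely additive probability measure `μ` on a countable unital inverse semigroup is
invariant (`μ(A) = μ(s⁻¹A)` for all `s`, `A`) if and only if for all `s`, `A`:
(2.a) `μ(A) = μ(A ∩ (s*s)A)` and (2.b) `μ((s*s)A) = μ(sA)`. -/
theorem statement5 (S : Type*) [Monoid S] [Star S] [IsInverseSemigroup S] [Countable S]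
    (μ : Set S → ℝ) (hμ : IsFinAddProb μ) :
    (∀ (s : S) (A : Set S), μ A = μ {t | s * t ∈ A}) ↔
    (∀ (s : S) (A : Set S),
      μ A = μ (A ∩ lmulSet (star s * s) A) ∧
      μ (lmulSet (star s * s) A) = μ (lmulSet s A)) :=
  statement5_general S μ
end

section
/- Let α be a representation of a unital inverse semigroup S on a set X and let A, B ⊆ X. If A is equidecomposable with some subset of B and B is equidecomposable with some subset of A, then A and B are equidecomposable. -/
open scoped ENNReal

/-- A representation of a unital inverse semigroup `S` on a set `X`: a unital semigroup
homomorphism into the inverse semigroup of partial bijections of `X` (encoded as `PEquiv`s)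
compatible with the involution.  The domain of the partial bijection `α s` is `D_{s*s}` and
its range is `D_{ss*}`; for an idempotent `e`, `D_e` is the domain of `α e`. -/
structure InverseSemigroupRep (S : Type*) [Monoid S] [Star S] (X : Type*) where
  α : S → X ≃. X
  map_one : α 1 = PEquiv.refl X
  map_star : ∀ s : S, α (star s) = (α s).symm
  map_mul : ∀ s t : S, α (s * t) = (α t).trans (α s)

/-- A finitely additive `[0,∞]`-valued measure on the power set of `X`. -/
def IsFinAddMeasure {X : Type*} (μ : Set X → ℝ≥0∞) : Prop :=
  μ (∅ : Set X) = 0 ∧ ∀ A B : Set X, Disjoint A B → μ (A ∪ B) = μ A + μ B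

namespace InverseSemigroupRep

variable {S X : Type*} [Monoid S] [Star S] (r : InverseSemigroupRep S X)

/-- The domain `D_{s*s}` of the partial bijection `α s`; for an idempotent `e`,
`r.dom e` is the set `D_e`. -/
def dom (s : S) : Set X := {x | ((r.α s) x).isSome}

/-- The image `α_s(B)` of a subset `B ⊆ X` under the partial bijection `α s`. -/
def im (s : S) (B : Set X) : Set X := {y | ∃ x ∈ B, (r.α s) x = some y}

/-- `A ⊆ X` is `S`-domain measurable: there is a finitely additive measure on `𝒫(X)`
normalized at `A` and invariant on domains. -/
def SDomainMeasurableSet (A : Set X) : Prop :=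
  ∃ μ : Set X → ℝ≥0∞, IsFinAddMeasure μ ∧ μ A = 1 ∧
    ∀ (s : S) (B : Set X), B ⊆ r.dom s → μ (r.im s B) = μ B

/-- `A ⊆ X` is `S`-amenable: there is a finitely additive measure on `𝒫(X)` normalized at
`A`, invariant on domains, and localized (`μ(B) = μ(B ∩ D_{t*t})` for all `t`). -/
def SAmenableSet (A : Set X) : Prop :=
  ∃ μ : Set X → ℝ≥0∞, IsFinAddMeasure μ ∧ μ A = 1 ∧
    (∀ (s : S) (B : Set X), B ⊆ r.dom s → μ (r.im s B) = μ B) ∧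
    (∀ (t : S) (B : Set X), μ B = μ (B ∩ r.dom t))

/-- `A ⊆ X` is `S`-paradoxical: `A` admits two disjoint families of pairwise disjoint
subsets, each contained in the appropriate domain, whose images partition `A` twice. -/
def SParadoxical (A : Set X) : Prop :=
  ∃ (n m : ℕ) (s : Fin n → S) (t : Fin m → S) (As : Fin n → Set X) (Bs : Fin m → Set X),
    (∀ i, As i ⊆ A) ∧ (∀ j, Bs j ⊆ A) ∧
    (∀ i, As i ⊆ r.dom (s i)) ∧ (∀ j, Bs j ⊆ r.dom (t j)) ∧
    (∀ i j, i ≠ j → Disjoint (As i) (As j)) ∧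
    (∀ i j, i ≠ j → Disjoint (Bs i) (Bs j)) ∧
    (∀ i j, Disjoint (As i) (Bs j)) ∧
    (∀ i j, i ≠ j → Disjoint (r.im (s i) (As i)) (r.im (s j) (As j))) ∧
    (∀ i j, i ≠ j → Disjoint (r.im (t i) (Bs i)) (r.im (t j) (Bs j))) ∧
    (⋃ i, r.im (s i) (As i)) = A ∧ (⋃ j, r.im (t j) (Bs j)) = A

/-- `A ⊆ X` is `S`-domain Følner: there is a sequence of finite non-empty subsets `F n ⊆ A`
with `|α_s(F n ∩ D_{s*s}) \ F n| / |F n| → 0` for every `s ∈ S`. -/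
def SDomainFolner (A : Set X) : Prop :=
  ∃ F : ℕ → Finset X, (∀ n, (F n).Nonempty) ∧ (∀ n, (F n : Set X) ⊆ A) ∧
    ∀ s : S, Filter.Tendsto
      (fun n => ((r.im s ((F n : Set X) ∩ r.dom s) \ (F n : Set X)).ncard : ℝ) / (F n).card)
      Filter.atTop (nhds 0)

end InverseSemigroupRep

namespace InverseSemigroupRep

variable {S X : Type*} [Monoid S] [Star S] (r : InverseSemigroupRep S X)

/-- `A` and `B` are equidecomposable: there are `s₁,…,s_n ∈ S` and a partition
`A = A₁ ⊔ ⋯ ⊔ A_n` with `A_i ⊆ D_{s_i* s_i}` and `B = α_{s₁}(A₁) ⊔ ⋯ ⊔ α_{s_n}(A_n)`. -/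
def Equidecomposable (A B : Set X) : Prop :=
  ∃ (n : ℕ) (s : Fin n → S) (As : Fin n → Set X),
    (∀ i, As i ⊆ r.dom (s i)) ∧
    (∀ i j, i ≠ j → Disjoint (As i) (As j)) ∧ (⋃ i, As i) = A ∧
    (∀ i j, i ≠ j → Disjoint (r.im (s i) (As i)) (r.im (s j) (As j))) ∧
    (⋃ i, r.im (s i) (As i)) = B

end InverseSemigroupRep

/-!
Banach's proof of the Schröder–Bernstein theorem, with point maps replaced by maps of subsets.
An equidecomposition of `A` with `B` induces a map `Φ` on subsets of `A` that commutes with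
differences, sends `A` to `B`, and makes every `C ⊆ A` equidecomposable with `Φ C`. Given such
maps `Φ` from `A` into `B` and `Ψ` from `B` into `A`, the least fixed point `C` of
`C ↦ (A \ Ψ B) ∪ Ψ (Φ C)` satisfies `Ψ (B \ Φ C) = A \ C`, so `A = C ⊔ (A \ C)` is
equidecomposable with `B = Φ C ⊔ (B \ Φ C)` piece by piece.
-/

open Set Function

theorem monotone_of_map_sdiff {X Y : Type*} {Φ : Set X → Set Y}
    (hΦ : ∀ C D, Φ (C \ D) = Φ C \ Φ D) : Monotone Φ := by
  intro C D hCD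
  have hempty : Φ ∅ = ∅ := by simpa using hΦ ∅ ∅
  rw [← sdiff_eq_empty, ← hΦ, sdiff_eq_empty.2 hCD, hempty]

theorem exists_subset_map_sdiff_eq_sdiff {X : Type*} {A B : Set X} {Φ Ψ : Set X → Set X}
    (hΦ : Monotone Φ) (hΨ : ∀ C D, Ψ (C \ D) = Ψ C \ Ψ D) (hΦA : Φ A ⊆ B) (hΨB : Ψ B ⊆ A) :
    ∃ C ⊆ A, Ψ (B \ Φ C) = A \ C := by
  have hΨmono := monotone_of_map_sdiff hΨ
  let f : Set X →o Set X :=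
    ⟨fun C => (A \ Ψ B) ∪ Ψ (Φ C), fun _ _ h => union_subset_union_right _ (hΨmono (hΦ h))⟩
  have hfA : f A ⊆ A := union_subset sdiff_subset ((hΨmono hΦA).trans hΨB)
  have hCA : f.lfp ⊆ A := f.lfp_le hfA
  have hC : f.lfp = (A \ Ψ B) ∪ Ψ (Φ f.lfp) := f.map_lfp.symm
  have hΨΦ : Ψ (Φ f.lfp) ⊆ Ψ B := hΨmono ((hΦ hCA).trans hΦA)
  refine ⟨f.lfp, hCA, ?_⟩
  rw [hΨ]
  conv_rhs => rw [hC]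
  ext x
  have := @hΨB x
  have := @hΨΦ x
  simp only [mem_sdiff, mem_union]
  tauto

theorem pairwise_disjoint_on_sumElim {α ι κ : Type*} [PartialOrder α] [OrderBot α]
    {f : ι → α} {g : κ → α} (hf : Pairwise (Disjoint on f)) (hg : Pairwise (Disjoint on g))
    (hfg : ∀ i j, Disjoint (f i) (g j)) : Pairwise (Disjoint on Sum.elim f g) := by
  rintro (i | i) (j | j) hij
  · exact hf (fun h => hij (congrArg _ h))
  · exact hfg i j
  · exact (hfg j i).symm
  · exact hg (fun h => hij (congrArg _ h))

namespace InverseSemigroupRep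

variable {S X : Type*} [Monoid S] [Star S] (r : InverseSemigroupRep S X)

theorem im_mono (s : S) {C D : Set X} (h : C ⊆ D) : r.im s C ⊆ r.im s D :=
  fun _ ⟨x, hx, hxy⟩ => ⟨x, h hx, hxy⟩

theorem im_subset_dom_star (s : S) (C : Set X) : r.im s C ⊆ r.dom (star s) := by
  rintro y ⟨x, -, hxy⟩
  simp only [dom, mem_ofPred_eq, r.map_star, (r.α s).eq_some_iff.2 hxy, Option.isSome_some]

theorem im_star_im (s : S) {C : Set X} (h : C ⊆ r.dom s) : r.im (star s) (r.im s C) = C := by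
  ext y
  simp only [im, r.map_star, PEquiv.eq_some_iff, mem_ofPred_eq]
  constructor
  · rintro ⟨x, ⟨c, hc, hcx⟩, hyx⟩
    rwa [(r.α s).inj hyx hcx]
  · intro hy
    obtain ⟨x, hx⟩ := Option.isSome_iff_exists.1 (h hy)
    exact ⟨x, ⟨y, hy, hx⟩, hx⟩

structure IsEquidecomposition {ι : Type*} (s : ι → S) (As : ι → Set X) (A B : Set X) : Prop where
  subset_dom : ∀ i, As i ⊆ r.dom (s i)
  pairwise_disjoint : Pairwise (Disjoint on As)
  iUnion_eq : ⋃ i, As i = A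
  pairwise_disjoint_im : Pairwise (Disjoint on fun i => r.im (s i) (As i))
  iUnion_im_eq : ⋃ i, r.im (s i) (As i) = B

theorem equidecomposable_iff {A B : Set X} :
    r.Equidecomposable A B ↔
      ∃ (n : ℕ) (s : Fin n → S) (As : Fin n → Set X), r.IsEquidecomposition s As A B :=
  ⟨fun ⟨n, s, As, h₁, h₂, h₃, h₄, h₅⟩ =>
      ⟨n, s, As, h₁, fun _ _ h => h₂ _ _ h, h₃, fun _ _ h => h₄ _ _ h, h₅⟩,
    fun ⟨n, s, As, h₁, h₂, h₃, h₄, h₅⟩ =>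
      ⟨n, s, As, h₁, fun _ _ h => h₂ h, h₃, fun _ _ h => h₄ h, h₅⟩⟩

namespace IsEquidecomposition

variable {r} {ι κ : Type*} {s : ι → S} {As : ι → Set X} {A B : Set X}

theorem comp_equiv (h : r.IsEquidecomposition s As A B) (e : κ ≃ ι) :
    r.IsEquidecomposition (s ∘ e) (As ∘ e) A B where
  subset_dom k := h.subset_dom (e k)
  pairwise_disjoint := h.pairwise_disjoint.comp_of_injective e.injective
  iUnion_eq := (e.surjective.iUnion_comp As).trans h.iUnion_eq
  pairwise_disjoint_im := h.pairwise_disjoint_im.comp_of_injective e.injective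
  iUnion_im_eq := (e.surjective.iUnion_comp fun i => r.im (s i) (As i)).trans h.iUnion_im_eq

theorem equidecomposable [Finite ι] (h : r.IsEquidecomposition s As A B) :
    r.Equidecomposable A B := by
  obtain ⟨n, ⟨e⟩⟩ := Finite.exists_equiv_fin ι
  exact r.equidecomposable_iff.2 ⟨n, _, _, h.comp_equiv e.symm⟩

theorem symm (h : r.IsEquidecomposition s As A B) :
    r.IsEquidecomposition (star ∘ s) (fun i => r.im (s i) (As i)) B A := by
  have hback : ∀ i, r.im (star (s i)) (r.im (s i) (As i)) = As i :=
    fun i => r.im_star_im (s i) (h.subset_dom i)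
  refine ⟨fun i => r.im_subset_dom_star (s i) (As i), h.pairwise_disjoint_im, h.iUnion_im_eq,
    ?_, ?_⟩
  · simpa only [comp_apply, hback] using h.pairwise_disjoint
  · simpa only [comp_apply, hback] using h.iUnion_eq

theorem sumElim {s' : κ → S} {As' : κ → Set X} {A' B' : Set X}
    (h : r.IsEquidecomposition s As A B) (h' : r.IsEquidecomposition s' As' A' B')
    (hA : Disjoint A A') (hB : Disjoint B B') :
    r.IsEquidecomposition (Sum.elim s s') (Sum.elim As As') (A ∪ A') (B ∪ B') := by
  have him : (fun i => r.im (Sum.elim s s' i) (Sum.elim As As' i)) =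
      Sum.elim (fun i => r.im (s i) (As i)) (fun k => r.im (s' k) (As' k)) := by
    ext (i | k) <;> rfl
  refine ⟨?_, ?_, ?_, ?_, ?_⟩
  · rintro (i | k)
    exacts [h.subset_dom i, h'.subset_dom k]
  · refine pairwise_disjoint_on_sumElim h.pairwise_disjoint h'.pairwise_disjoint fun i k => ?_
    exact hA.mono (h.iUnion_eq ▸ subset_iUnion As i) (h'.iUnion_eq ▸ subset_iUnion As' k)
  · rw [iUnion_sumElim, h.iUnion_eq, h'.iUnion_eq]
  · refine him ▸ pairwise_disjoint_on_sumElim h.pairwise_disjoint_im h'.pairwise_disjoint_im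
      fun i k => hB.mono ?_ ?_
    exacts [h.iUnion_im_eq ▸ subset_iUnion (fun i => r.im (s i) (As i)) i,
      h'.iUnion_im_eq ▸ subset_iUnion (fun k => r.im (s' k) (As' k)) k]
  · rw [him, iUnion_sumElim, h.iUnion_im_eq, h'.iUnion_im_eq]

end IsEquidecomposition

def pieceImage {ι : Type*} (s : ι → S) (As : ι → Set X) (C : Set X) : Set X :=
  ⋃ i, r.im (s i) (As i ∩ C)

namespace IsEquidecomposition

variable {r} {ι : Type*} {s : ι → S} {As : ι → Set X} {A B : Set X}

theorem pieceImage_self (h : r.IsEquidecomposition s As A B) : r.pieceImage s As A = B := by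
  rw [← h.iUnion_im_eq]
  exact iUnion_congr fun i => by rw [inter_eq_left.2 (h.iUnion_eq ▸ subset_iUnion As i)]

theorem pieceImage_sdiff (h : r.IsEquidecomposition s As A B) (C D : Set X) :
    r.pieceImage s As (C \ D) = r.pieceImage s As C \ r.pieceImage s As D := by
  ext y
  simp only [pieceImage, mem_iUnion, mem_sdiff, not_exists]
  constructor
  · rintro ⟨i, x, ⟨hxi, hxC, hxD⟩, hxy⟩
    refine ⟨⟨i, x, ⟨hxi, hxC⟩, hxy⟩, fun j ⟨x', ⟨hx'j, hx'D⟩, hx'y⟩ => ?_⟩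
    rcases eq_or_ne i j with rfl | hij
    · exact hxD ((r.α (s i)).inj hxy hx'y ▸ hx'D)
    · exact disjoint_left.1 (h.pairwise_disjoint_im hij) ⟨x, hxi, hxy⟩ ⟨x', hx'j, hx'y⟩
  · rintro ⟨⟨i, x, ⟨hxi, hxC⟩, hxy⟩, hyD⟩
    exact ⟨i, x, ⟨hxi, hxC, fun hxD => hyD i ⟨x, ⟨hxi, hxD⟩, hxy⟩⟩, hxy⟩

theorem restrict (h : r.IsEquidecomposition s As A B) {C : Set X} (hC : C ⊆ A) :
    r.IsEquidecomposition s (fun i => As i ∩ C) C (r.pieceImage s As C) where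
  subset_dom i := inter_subset_left.trans (h.subset_dom i)
  pairwise_disjoint _ _ hij := (h.pairwise_disjoint hij).mono inter_subset_left inter_subset_left
  iUnion_eq := by rw [← iUnion_inter, h.iUnion_eq, inter_eq_right.2 hC]
  pairwise_disjoint_im _ _ hij := (h.pairwise_disjoint_im hij).mono
    (r.im_mono _ inter_subset_left) (r.im_mono _ inter_subset_left)
  iUnion_im_eq := rfl

end IsEquidecomposition

namespace Equidecomposable

variable {r} {A B : Set X}

theorem symm (h : r.Equidecomposable A B) : r.Equidecomposable B A := by
  obtain ⟨n, s, As, h⟩ := r.equidecomposable_iff.1 h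
  exact h.symm.equidecomposable

theorem union {A' B' : Set X} (h : r.Equidecomposable A B) (h' : r.Equidecomposable A' B')
    (hA : Disjoint A A') (hB : Disjoint B B') : r.Equidecomposable (A ∪ A') (B ∪ B') := by
  obtain ⟨n, s, As, h⟩ := r.equidecomposable_iff.1 h
  obtain ⟨m, s', As', h'⟩ := r.equidecomposable_iff.1 h'
  exact (h.sumElim h' hA hB).equidecomposable

theorem exists_map_sdiff (h : r.Equidecomposable A B) :
    ∃ Φ : Set X → Set X, (∀ C D, Φ (C \ D) = Φ C \ Φ D) ∧ Φ A = B ∧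
      ∀ C ⊆ A, r.Equidecomposable C (Φ C) := by
  obtain ⟨n, s, As, h⟩ := r.equidecomposable_iff.1 h
  exact ⟨r.pieceImage s As, h.pieceImage_sdiff, h.pieceImage_self,
    fun C hC => (h.restrict hC).equidecomposable⟩

end Equidecomposable

end InverseSemigroupRep

theorem statement7_general {S X : Type*} [Monoid S] [Star S]
    (r : InverseSemigroupRep S X) (A B : Set X)
    (h1 : ∃ B' : Set X, B' ⊆ B ∧ r.Equidecomposable A B')
    (h2 : ∃ A' : Set X, A' ⊆ A ∧ r.Equidecomposable B A') :
    r.Equidecomposable A B := by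
  obtain ⟨B', hB'B, hAB'⟩ := h1
  obtain ⟨A', hA'A, hBA'⟩ := h2
  obtain ⟨Φ, hΦ, hΦA, hΦeq⟩ := hAB'.exists_map_sdiff
  obtain ⟨Ψ, hΨ, hΨB, hΨeq⟩ := hBA'.exists_map_sdiff
  have hΦmono := monotone_of_map_sdiff hΦ
  obtain ⟨C, hCA, hC⟩ :=
    exists_subset_map_sdiff_eq_sdiff hΦmono hΨ (hΦA ▸ hB'B) (hΨB ▸ hA'A)
  have hΦC : Φ C ⊆ B := (hΦmono hCA).trans (hΦA ▸ hB'B)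
  have hrest : r.Equidecomposable (A \ C) (B \ Φ C) := (hC ▸ hΨeq _ sdiff_subset).symm
  have := (hΦeq C hCA).union hrest disjoint_sdiff_right disjoint_sdiff_right
  rwa [union_sdiff_cancel hCA, union_sdiff_cancel hΦC] at this

/-- If `A` is equidecomposable with a subset of `B` and `B` is equidecomposable with a
subset of `A`, then `A` and `B` are equidecomposable. -/
theorem statement7 {S X : Type*} [Monoid S] [Star S] [IsInverseSemigroup S]
    (r : InverseSemigroupRep S X) (A B : Set X)
    (h1 : ∃ B' : Set X, B' ⊆ B ∧ r.Equidecomposable A B')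
    (h2 : ∃ A' : Set X, A' ⊆ A ∧ r.Equidecomposable B A') :
    r.Equidecomposable A B :=
  statement7_general r A B h1 h2
end

section
/- Let α be a representation of a countable discrete unital inverse semigroup S on a set X. If X is S-domain measurable, then there exists a state m on ℓ∞(X) (a linear functional on the bounded complex-valued functions on X with m(f) ≥ 0 whenever f ≥ 0 and m(1) = 1) such that m(s·f) = m(f·χ_{D_{s*s}}) for every f ∈ ℓ∞(X) and every s ∈ S, where χ_{D_{s*s}} is the characteristic function of D_{s*s}. -/
open scoped ENNReal

/-!
Integrate against the invariant finitely additive probability `μ`. For a finitely-valued `w`,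
`∫ w = ∑ c, c μ(w⁻¹{c})` is linear, positive and `1`-Lipschitz for the sup norm; rounding to
a grid approximates every bounded function uniformly by finitely-valued ones, so the integral
extends to a state on `ℓ∞(X)`. For finitely-valued `w`, the level sets of `s·w` are the images
under `α_s` of the level sets of `w·χ_{D_{s*s}}`, which lie in `D_{s*s}`, so invariance of `μ`
gives `∫ s·w = ∫ w·χ_{D_{s*s}}`; rounding commutes with both operations since it fixes `0`.
-/

open Set Filter Topology
open scoped ComplexOrder

structure FinAddProb (X : Type*) where
  toFun : Set X → ℝ
  nonneg' : ∀ A, 0 ≤ toFun A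
  union' : ∀ A B, Disjoint A B → toFun (A ∪ B) = toFun A + toFun B
  univ' : toFun univ = 1

namespace FinAddProb

variable {X : Type*}

instance : CoeFun (FinAddProb X) (fun _ => Set X → ℝ) := ⟨toFun⟩

variable (μ : FinAddProb X)

lemma measure_nonneg (A : Set X) : 0 ≤ μ A := μ.nonneg' A

lemma measure_union {A B : Set X} (h : Disjoint A B) : μ (A ∪ B) = μ A + μ B := μ.union' A B h

lemma measure_univ : μ univ = 1 := μ.univ'

lemma measure_empty : μ ∅ = 0 := by
  have h := μ.measure_union (disjoint_empty (∅ : Set X))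
  rw [union_empty] at h
  linarith

lemma measure_biUnion_finset {ι : Type*} (T : Finset ι) {C : ι → Set X}
    (hC : (T : Set ι).PairwiseDisjoint C) : μ (⋃ i ∈ T, C i) = ∑ i ∈ T, μ (C i) := by
  classical
  induction T using Finset.induction_on with
  | empty => simpa using μ.measure_empty
  | insert a T ha ih =>
    rw [Finset.coe_insert, pairwiseDisjoint_insert_of_notMem (by simpa)] at hC
    rw [Finset.set_biUnion_insert, Finset.sum_insert ha, μ.measure_union, ih hC.1]
    exact disjoint_iUnion₂_right.2 hC.2

lemma measure_preimage_eq_sum {ι : Type*} {p : X → ι} {T : Finset ι} (hT : range p ⊆ T)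
    (P : ι → Prop) [DecidablePred P] :
    μ (p ⁻¹' {i | P i}) = ∑ i ∈ T with P i, μ (p ⁻¹' {i}) := by
  rw [← μ.measure_biUnion_finset]
  · congr 1
    ext x
    simpa using fun hx => hT ⟨x, rfl⟩
  · intro i _ j _ hij
    exact (disjoint_singleton.2 hij).preimage p

lemma sum_measure_preimage_singleton {ι : Type*} {p : X → ι} {T : Finset ι} (hT : range p ⊆ T) :
    ∑ i ∈ T, μ (p ⁻¹' {i}) = 1 := by
  classical
  simpa [μ.measure_univ] using (μ.measure_preimage_eq_sum hT fun _ => True).symm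

/-- Junk (zero) unless `w` has finite range. -/
noncomputable def simpleIntegral (w : X → ℂ) : ℂ := ∑ᶠ c, c * μ (w ⁻¹' {c})

lemma simpleIntegral_comp_eq_sum {ι : Type*} {p : X → ι} {T : Finset ι} (hT : range p ⊆ T)
    (g : ι → ℂ) : μ.simpleIntegral (g ∘ p) = ∑ i ∈ T, g i * μ (p ⁻¹' {i}) := by
  classical
  have hsupp : (Function.support fun c => c * (μ ((g ∘ p) ⁻¹' {c}) : ℂ)) ⊆ ↑(T.image g) := by
    intro c hc
    by_contra hcT
    have hempty : (g ∘ p) ⁻¹' {c} = ∅ := by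
      ext x
      simp only [mem_preimage, Function.comp_apply, mem_singleton_iff, mem_empty_iff_false,
        iff_false]
      rintro rfl
      exact hcT (Finset.mem_image_of_mem g (hT ⟨x, rfl⟩))
    simp [hempty, μ.measure_empty] at hc
  rw [simpleIntegral, finsum_eq_sum_of_support_subset _ hsupp]
  refine Finset.sum_image' _ fun i _ => ?_
  rw [show (g ∘ p) ⁻¹' {g i} = p ⁻¹' {j | g j = g i} from rfl,
    μ.measure_preimage_eq_sum hT, Complex.ofReal_sum, Finset.mul_sum]
  refine Finset.sum_congr rfl fun j hj => ?_
  rw [(Finset.mem_filter.1 hj).2]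

lemma simpleIntegral_eq_sum {w : X → ℂ} {T : Finset ℂ} (hT : range w ⊆ T) :
    μ.simpleIntegral w = ∑ c ∈ T, c * μ (w ⁻¹' {c}) :=
  μ.simpleIntegral_comp_eq_sum hT id

lemma simpleIntegral_one : μ.simpleIntegral (fun _ => 1) = 1 := by
  rw [μ.simpleIntegral_eq_sum (T := {1}) (by simp)]
  simp [μ.measure_univ]

lemma simpleIntegral_add {u v : X → ℂ} (hu : (range u).Finite) (hv : (range v).Finite) :
    μ.simpleIntegral (u + v) = μ.simpleIntegral u + μ.simpleIntegral v := by
  have hT : range (fun x => (u x, v x)) ⊆ ↑(hu.toFinset ×ˢ hv.toFinset) := by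
    rintro _ ⟨x, rfl⟩
    simp
  have key := μ.simpleIntegral_comp_eq_sum hT
  have h₁ : μ.simpleIntegral (u + v) = _ := key fun q => q.1 + q.2
  have h₂ : μ.simpleIntegral u = _ := key Prod.fst
  have h₃ : μ.simpleIntegral v = _ := key Prod.snd
  rw [h₁, h₂, h₃, ← Finset.sum_add_distrib]
  simp only [add_mul]

lemma simpleIntegral_smul (c : ℂ) {u : X → ℂ} (hu : (range u).Finite) :
    μ.simpleIntegral (c • u) = c * μ.simpleIntegral u := by
  have hT : range u ⊆ hu.toFinset := by simp
  have h₁ : μ.simpleIntegral (c • u) = _ := μ.simpleIntegral_comp_eq_sum hT (c * ·)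
  rw [h₁, μ.simpleIntegral_eq_sum hT, Finset.mul_sum]
  simp only [mul_assoc]

lemma dist_simpleIntegral_le {u v : X → ℂ} (hu : (range u).Finite) (hv : (range v).Finite)
    {δ : ℝ} (h : ∀ x, dist (u x) (v x) ≤ δ) :
    dist (μ.simpleIntegral u) (μ.simpleIntegral v) ≤ δ := by
  set p : X → ℂ × ℂ := fun x => (u x, v x)
  have hp : (range p).Finite :=
    (hu.prod hv).subset (range_subset_iff.2 fun x => ⟨⟨x, rfl⟩, ⟨x, rfl⟩⟩)
  have hT : range p ⊆ hp.toFinset := by simp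
  have h₁ : μ.simpleIntegral u = _ := μ.simpleIntegral_comp_eq_sum hT Prod.fst
  have h₂ : μ.simpleIntegral v = _ := μ.simpleIntegral_comp_eq_sum hT Prod.snd
  rw [dist_eq_norm, h₁, h₂, ← Finset.sum_sub_distrib]
  calc ‖∑ q ∈ hp.toFinset, (q.1 * (μ (p ⁻¹' {q}) : ℂ) - q.2 * μ (p ⁻¹' {q}))‖
      ≤ ∑ q ∈ hp.toFinset, ‖q.1 * (μ (p ⁻¹' {q}) : ℂ) - q.2 * μ (p ⁻¹' {q})‖ := norm_sum_le _ _
    _ ≤ ∑ q ∈ hp.toFinset, δ * μ (p ⁻¹' {q}) := by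
      refine Finset.sum_le_sum fun q hq => ?_
      obtain ⟨x, rfl⟩ := hp.mem_toFinset.1 hq
      rw [← sub_mul, norm_mul, Complex.norm_real, Real.norm_of_nonneg (μ.measure_nonneg _),
        ← dist_eq_norm]
      exact mul_le_mul_of_nonneg_right (h x) (μ.measure_nonneg _)
    _ = δ := by rw [← Finset.mul_sum, μ.sum_measure_preimage_singleton hT, mul_one]

lemma simpleIntegral_nonneg {w : X → ℂ} (hw : (range w).Finite) (h : ∀ x, 0 ≤ w x) :
    0 ≤ μ.simpleIntegral w := by
  rw [μ.simpleIntegral_eq_sum (T := hw.toFinset) (by simp)]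
  refine Finset.sum_nonneg fun c hc => mul_nonneg ?_ (Complex.zero_le_real.2 (μ.measure_nonneg _))
  obtain ⟨x, rfl⟩ := hw.mem_toFinset.1 hc
  exact h x

end FinAddProb

noncomputable def gridRound (n : ℕ) (c : ℂ) : ℂ :=
  ⟨⌊(n + 1) * c.re⌋ / (n + 1), ⌊(n + 1) * c.im⌋ / (n + 1)⟩

lemma abs_floor_mul_div_sub_le {m : ℝ} (hm : 0 < m) (t : ℝ) : |⌊m * t⌋ / m - t| ≤ 1 / m := by
  have he : (⌊m * t⌋ : ℝ) / m - t = (⌊m * t⌋ - m * t) / m := by field_simp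
  rw [he, abs_div, abs_of_pos hm]
  gcongr
  rw [abs_le]
  constructor <;> linarith [Int.floor_le (m * t), Int.lt_floor_add_one (m * t)]

lemma dist_gridRound_le (n : ℕ) (c : ℂ) : dist (gridRound n c) c ≤ 2 / (n + 1) := by
  have hm : (0 : ℝ) < n + 1 := by positivity
  rw [dist_eq_norm]
  calc ‖gridRound n c - c‖ ≤ |(gridRound n c - c).re| + |(gridRound n c - c).im| :=
        Complex.norm_le_abs_re_add_abs_im _
    _ ≤ 1 / (n + 1) + 1 / (n + 1) :=
        add_le_add (abs_floor_mul_div_sub_le hm c.re) (abs_floor_mul_div_sub_le hm c.im)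
    _ = 2 / (n + 1) := by ring

lemma tendstoUniformly_gridRound {X : Type*} (f : X → ℂ) :
    TendstoUniformly (fun n x => gridRound n (f x)) f atTop := by
  rw [Metric.tendstoUniformly_iff]
  intro ε hε
  filter_upwards [(tendsto_one_div_add_atTop_nhds_zero_nat.const_mul 2).eventually
    (gt_mem_nhds (show 2 * 0 < ε by linarith))] with n hn x
  rw [dist_comm]
  calc _ ≤ (2 : ℝ) / (n + 1) := dist_gridRound_le n (f x)
    _ = 2 * (1 / (n + 1)) := by ring
    _ < ε := hn

lemma finite_range_gridRound {X : Type*} {f : X → ℂ} {C : ℝ} (hf : ∀ x, ‖f x‖ ≤ C) (n : ℕ) :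
    (range fun x => gridRound n (f x)).Finite := by
  have hm : (0 : ℝ) < n + 1 := by positivity
  set I := Icc ⌊-((n + 1 : ℝ) * C)⌋ ⌊(n + 1 : ℝ) * C⌋
  have hfloor : ∀ t : ℝ, |t| ≤ C → ⌊(n + 1) * t⌋ ∈ I :=
    fun t ht => ⟨Int.floor_mono (by nlinarith [neg_abs_le t]),
      Int.floor_mono (by nlinarith [le_abs_self t])⟩
  refine (((finite_Icc _ _ : I.Finite).prod (finite_Icc _ _ : I.Finite)).image
    fun k : ℤ × ℤ => (⟨k.1 / (n + 1), k.2 / (n + 1)⟩ : ℂ)).subset ?_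
  rintro _ ⟨x, rfl⟩
  exact ⟨(_, _), ⟨hfloor _ ((Complex.abs_re_le_norm _).trans (hf x)),
    hfloor _ ((Complex.abs_im_le_norm _).trans (hf x))⟩, rfl⟩

lemma gridRound_zero (n : ℕ) : gridRound n 0 = 0 := by
  apply Complex.ext <;> simp [gridRound]

lemma gridRound_nonneg (n : ℕ) {c : ℂ} (hc : 0 ≤ c) : 0 ≤ gridRound n c := by
  obtain ⟨hre, him⟩ := Complex.nonneg_iff.1 hc
  refine Complex.nonneg_iff.2 ⟨div_nonneg ?_ (by positivity), ?_⟩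
  · exact Int.cast_nonneg (Int.floor_nonneg.2 (mul_nonneg (by positivity) hre))
  · simp [gridRound, ← him]

namespace FinAddProb

variable {X : Type*} (μ : FinAddProb X)

/-- Only meaningful for bounded `f`: otherwise the rounded functions have infinite range. -/
noncomputable def integral (f : X → ℂ) : ℂ :=
  limUnder atTop fun n => μ.simpleIntegral fun x => gridRound n (f x)

lemma tendsto_dist_simpleIntegral {ι : Type*} {l : Filter ι} {f : X → ℂ} {w w' : ι → X → ℂ}
    (hw : ∀ i, (range (w i)).Finite) (hw' : ∀ i, (range (w' i)).Finite)
    (h : TendstoUniformly w f l) (h' : TendstoUniformly w' f l) :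
    Tendsto (fun i => dist (μ.simpleIntegral (w i)) (μ.simpleIntegral (w' i))) l (𝓝 0) := by
  rw [Metric.tendsto_nhds]
  intro ε hε
  filter_upwards [Metric.tendstoUniformly_iff.1 h (ε / 3) (by positivity),
    Metric.tendstoUniformly_iff.1 h' (ε / 3) (by positivity)] with i hi hi'
  rw [Real.dist_0_eq_abs, abs_of_nonneg dist_nonneg]
  calc _ ≤ ε / 3 + ε / 3 := μ.dist_simpleIntegral_le (hw i) (hw' i) fun x =>
        ((dist_triangle_left _ _ (f x)).trans (add_lt_add (hi x) (hi' x)).le)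
    _ < ε := by linarith

lemma tendsto_simpleIntegral_gridRound {f : X → ℂ} {C : ℝ} (hf : ∀ x, ‖f x‖ ≤ C) :
    Tendsto (fun n => μ.simpleIntegral fun x => gridRound n (f x)) atTop (𝓝 (μ.integral f)) := by
  have hu := tendstoUniformly_gridRound f
  have hcauchy : CauchySeq fun n => μ.simpleIntegral fun x => gridRound n (f x) := by
    rw [cauchySeq_iff_tendsto_dist_atTop_0, ← prod_atTop_atTop_eq]
    exact μ.tendsto_dist_simpleIntegral (fun q => finite_range_gridRound hf q.1)
      (fun q => finite_range_gridRound hf q.2) (fun u hu' => tendsto_fst.eventually (hu u hu'))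
      (fun u hu' => tendsto_snd.eventually (hu u hu'))
  obtain ⟨L, hL⟩ := cauchySeq_tendsto_of_complete hcauchy
  rwa [integral, hL.limUnder_eq]

lemma tendsto_simpleIntegral_of_tendstoUniformly {f : X → ℂ} {C : ℝ} (hf : ∀ x, ‖f x‖ ≤ C)
    {w : ℕ → X → ℂ} (hw : ∀ n, (range (w n)).Finite) (h : TendstoUniformly w f atTop) :
    Tendsto (fun n => μ.simpleIntegral (w n)) atTop (𝓝 (μ.integral f)) :=
  (μ.tendsto_simpleIntegral_gridRound hf).congr_dist
    (μ.tendsto_dist_simpleIntegral (finite_range_gridRound hf) hw (tendstoUniformly_gridRound f) h)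

lemma integral_add {f g : X → ℂ} {C D : ℝ} (hf : ∀ x, ‖f x‖ ≤ C) (hg : ∀ x, ‖g x‖ ≤ D) :
    μ.integral (f + g) = μ.integral f + μ.integral g := by
  have hfg x : ‖(f + g) x‖ ≤ C + D := (norm_add_le _ _).trans (add_le_add (hf x) (hg x))
  have hfin n := finite_range_gridRound hf n
  have hgin n := finite_range_gridRound hg n
  refine tendsto_nhds_unique (μ.tendsto_simpleIntegral_of_tendstoUniformly hfg
    (fun n => ((hfin n).image2 (· + ·) (hgin n)).subset ?_)
    ((tendstoUniformly_gridRound f).add (tendstoUniformly_gridRound g))) ?_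
  · rintro _ ⟨x, rfl⟩
    exact mem_image2_of_mem ⟨x, rfl⟩ ⟨x, rfl⟩
  · simp_rw [Pi.add_apply, μ.simpleIntegral_add (hfin _) (hgin _)]
    exact (μ.tendsto_simpleIntegral_gridRound hf).add (μ.tendsto_simpleIntegral_gridRound hg)

lemma integral_smul (c : ℂ) {f : X → ℂ} {C : ℝ} (hf : ∀ x, ‖f x‖ ≤ C) :
    μ.integral (c • f) = c * μ.integral f := by
  have hcf x : ‖(c • f) x‖ ≤ ‖c‖ * C := by
    rw [Pi.smul_apply, norm_smul]
    exact mul_le_mul_of_nonneg_left (hf x) (norm_nonneg c)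
  have hfin n := finite_range_gridRound hf n
  refine tendsto_nhds_unique (μ.tendsto_simpleIntegral_of_tendstoUniformly hcf
    (w := fun n => c • fun x => gridRound n (f x))
    (fun n => ((hfin n).image (c • ·)).subset ?_) ?_) ?_
  · rintro _ ⟨x, rfl⟩
    exact mem_image_of_mem _ ⟨x, rfl⟩
  · exact (uniformContinuous_const_smul c).comp_tendstoUniformly (tendstoUniformly_gridRound f)
  · simp_rw [μ.simpleIntegral_smul c (hfin _)]
    exact (μ.tendsto_simpleIntegral_gridRound hf).const_mul c

lemma integral_nonneg {f : X → ℂ} {C : ℝ} (hf : ∀ x, ‖f x‖ ≤ C) (h : ∀ x, 0 ≤ f x) :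
    0 ≤ μ.integral f :=
  ge_of_tendsto' (μ.tendsto_simpleIntegral_gridRound hf) fun n =>
    μ.simpleIntegral_nonneg (finite_range_gridRound hf n) fun x => gridRound_nonneg n (h x)

lemma integral_one : μ.integral (fun _ => 1) = 1 :=
  tendsto_nhds_unique (μ.tendsto_simpleIntegral_of_tendstoUniformly (C := 1) (by simp)
    (fun _ => finite_range_const) fun _ hu => .of_forall fun _ _ => refl_mem_uniformity hu)
    (by simp only [μ.simpleIntegral_one, tendsto_const_nhds])

noncomputable def lpIntegral : lp (fun _ : X => ℂ) ∞ →ₗ[ℂ] ℂ where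
  toFun f := μ.integral f
  map_add' f g := by
    rw [lp.coeFn_add]
    exact μ.integral_add (lp.norm_apply_le_norm ENNReal.top_ne_zero f)
      (lp.norm_apply_le_norm ENNReal.top_ne_zero g)
  map_smul' c f := by
    rw [lp.coeFn_smul]
    exact μ.integral_smul c (lp.norm_apply_le_norm ENNReal.top_ne_zero f)

end FinAddProb

namespace InverseSemigroupRep

variable {S X : Type*} [Monoid S] [Star S] (r : InverseSemigroupRep S X)

def act (s : S) (f : X → ℂ) (x : X) : ℂ := (r.α (star s) x).elim 0 f

def IsInvariant (μ : FinAddProb X) : Prop := ∀ s B, B ⊆ r.dom s → μ (r.im s B) = μ B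

lemma exists_finAddProb_of_sDomainMeasurableSet (h : r.SDomainMeasurableSet (univ : Set X)) :
    ∃ μ : FinAddProb X, r.IsInvariant μ := by
  obtain ⟨μ, ⟨-, hadd⟩, huniv, hinv⟩ := h
  have hfin A : μ A ≠ ∞ := by
    refine ne_top_of_le_ne_top (huniv ▸ ENNReal.one_ne_top) ?_
    rw [← union_compl_self A, hadd A Aᶜ disjoint_compl_right]
    exact le_self_add
  refine ⟨⟨fun A => (μ A).toReal, fun _ => ENNReal.toReal_nonneg, fun A B hAB => ?_,
    by simp [huniv]⟩, fun s B hB => congrArg ENNReal.toReal (hinv s B hB)⟩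
  simp only [hadd A B hAB, ENNReal.toReal_add (hfin A) (hfin B)]

lemma simpleIntegral_act {μ : FinAddProb X} (hμ : r.IsInvariant μ) (s : S) {u : X → ℂ}
    (hu : (range u).Finite) :
    μ.simpleIntegral (r.act s u) = μ.simpleIntegral ((r.dom s).indicator u) := by
  classical
  -- Label each point by `some` of the value taken there, or by `none` where the function is `0`
  -- by convention; the `some c`-fibres of the two labellings correspond under `α_s`.
  set T : Finset (Option ℂ) := insert none (hu.toFinset.image some)
  set pL : X → Option ℂ := fun x => (r.α (star s) x).map u
  set pR : X → Option ℂ := fun x => if x ∈ r.dom s then some (u x) else none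
  have hL : μ.simpleIntegral (r.act s u) = ∑ o ∈ T, o.getD 0 * μ (pL ⁻¹' {o}) := by
    rw [← μ.simpleIntegral_comp_eq_sum]
    · congr 1
      funext x
      simp only [act, Function.comp_apply, pL]
      cases r.α (star s) x <;> rfl
    · rintro _ ⟨x, rfl⟩
      rcases h : r.α (star s) x with _ | y <;> simp [T, pL, h]
  have hR : μ.simpleIntegral ((r.dom s).indicator u) = ∑ o ∈ T, o.getD 0 * μ (pR ⁻¹' {o}) := by
    rw [← μ.simpleIntegral_comp_eq_sum]
    · congr 1
      funext x
      by_cases hx : x ∈ r.dom s <;> simp [pR, hx]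
    · rintro _ ⟨x, rfl⟩
      by_cases hx : x ∈ r.dom s <;> simp [T, pR, hx]
  rw [hL, hR]
  refine Finset.sum_congr rfl fun o _ => ?_
  cases o with
  | none => simp
  | some c =>
    have hdom : pR ⁻¹' {some c} ⊆ r.dom s := fun x hx => by
      by_contra h
      simp [pR, h] at hx
    have him : pL ⁻¹' {some c} = r.im s (pR ⁻¹' {some c}) := by
      ext y
      simp only [mem_preimage, mem_singleton_iff, Option.map_eq_some_iff, r.map_star,
        PEquiv.eq_some_iff, im, pL, pR]
      refine ⟨fun ⟨x, hxy, hx⟩ => ⟨x, ?_, hxy⟩, fun ⟨x, hx, hxy⟩ => ⟨x, hxy, ?_⟩⟩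
      · simp [dom, hxy, hx]
      · split_ifs at hx
        exact Option.some_injective _ hx
    rw [him, hμ s _ hdom]

lemma integral_act {μ : FinAddProb X} (hμ : r.IsInvariant μ) (s : S) {f : X → ℂ} {C : ℝ}
    (hf : ∀ x, ‖f x‖ ≤ C) :
    μ.integral (r.act s f) = μ.integral ((r.dom s).indicator f) := by
  have hact n : (fun x => gridRound n (r.act s f x)) = r.act s fun x => gridRound n (f x) := by
    funext x
    rcases h : r.α (star s) x with _ | y <;> simp [act, h, gridRound_zero]
  have hind n : (fun x => gridRound n ((r.dom s).indicator f x)) =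
      (r.dom s).indicator fun x => gridRound n (f x) :=
    (indicator_comp_of_zero (gridRound_zero n)).symm
  simp only [FinAddProb.integral, hact, hind, r.simpleIntegral_act hμ s
    (finite_range_gridRound hf _)]

end InverseSemigroupRep

theorem statement9_general {S X : Type*} [Monoid S] [Star S]
    (r : InverseSemigroupRep S X)
    (h : r.SDomainMeasurableSet (Set.univ : Set X)) :
    ∃ m : lp (fun _ : X => ℂ) ∞ →ₗ[ℂ] ℂ,
      (∀ f : lp (fun _ : X => ℂ) ∞,
        (∀ x : X, 0 ≤ (f x).re ∧ (f x).im = 0) → 0 ≤ (m f).re ∧ (m f).im = 0) ∧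
      (∀ f : lp (fun _ : X => ℂ) ∞, (∀ x : X, f x = 1) → m f = 1) ∧
      ∀ (s : S) (f g h' : lp (fun _ : X => ℂ) ∞),
        (∀ x : X, g x = ((r.α (star s)) x).elim 0 (fun y => f y)) →
        (∀ x : X, h' x = (r.dom s).indicator (fun y => f y) x) →
        m g = m h' := by
  obtain ⟨μ, hμ⟩ := r.exists_finAddProb_of_sDomainMeasurableSet h
  have hbound (f : lp (fun _ : X => ℂ) ∞) : ∀ x, ‖f x‖ ≤ ‖f‖ :=
    lp.norm_apply_le_norm ENNReal.top_ne_zero f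
  refine ⟨μ.lpIntegral, fun f hf => ?_, fun f hf => ?_, fun s f g h' hg hh' => ?_⟩
  · have hpos := μ.integral_nonneg (hbound f) fun x =>
      Complex.nonneg_iff.2 ⟨(hf x).1, (hf x).2.symm⟩
    exact ⟨(Complex.nonneg_iff.1 hpos).1, (Complex.nonneg_iff.1 hpos).2.symm⟩
  · change μ.integral f = 1
    rw [show ⇑f = fun _ => 1 from funext hf, μ.integral_one]
  · change μ.integral g = μ.integral h'
    rw [show ⇑g = r.act s f from funext hg, show ⇑h' = (r.dom s).indicator f from funext hh']
    exact r.integral_act hμ s (hbound f)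

/-- If `X` is `S`-domain measurable then there is a state `m` on `ℓ∞(X)` (a positive,
normalized linear functional on the bounded functions `lp (fun _ : X => ℂ) ∞`) such that
`m(s·f) = m(f·χ_{D_{s*s}})` for every `f ∈ ℓ∞(X)` and `s ∈ S`, where
`(s·f)(x) = f(α_{s*}(x))` for `x ∈ D_{ss*}` and `0` otherwise. -/
theorem statement9 {S X : Type*} [Monoid S] [Star S] [IsInverseSemigroup S] [Countable S]
    (r : InverseSemigroupRep S X)
    (h : r.SDomainMeasurableSet (Set.univ : Set X)) :
    ∃ m : lp (fun _ : X => ℂ) ∞ →ₗ[ℂ] ℂ,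
      (∀ f : lp (fun _ : X => ℂ) ∞,
        (∀ x : X, 0 ≤ (f x).re ∧ (f x).im = 0) → 0 ≤ (m f).re ∧ (m f).im = 0) ∧
      (∀ f : lp (fun _ : X => ℂ) ∞, (∀ x : X, f x = 1) → m f = 1) ∧
      ∀ (s : S) (f g h' : lp (fun _ : X => ℂ) ∞),
        (∀ x : X, g x = ((r.α (star s)) x).elim 0 (fun y => f y)) →
        (∀ x : X, h' x = (r.dom s).indicator (fun y => f y) x) →
        m g = m h' :=
  statement9_general r h
end
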